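/- arXiv:2003.06010 — 3 statements merged into one kernel-verified Lean document; each statement's English description precedes it below -/
import Mathlib

section
/- Under the assumptions of the kinetic system (u' = g(u)nu − b(n)u, n' = −γ g(u)nu, with g(0)=0, g increasing bounded, b positive decreasing, γ>0), every solution with u(0) > 0, n(0) > 0 satisfies u(t) > 0 and n(t) > 0 for all t ≥ 0, and u(t) → 0, n(t) → n_∞ for some n_∞ ≥ 0 as t → ∞. -/
open Set Filter intervalIntegral MeasureTheory

lemma aux_expMono (K : ℝ) (f f' : ℝ → ℝ) (D : Set ℝ) (hD : Convex ℝ D)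
    (hf : ∀ t ∈ D, HasDerivAt f (f' t) t)
    (hineq : ∀ t ∈ interior D, 0 ≤ f' t + K * f t) :
    MonotoneOn (fun t => f t * Real.exp (K * t)) D := by
  have hF : ∀ t ∈ D, HasDerivAt (fun t => f t * Real.exp (K * t))
      ((f' t + K * f t) * Real.exp (K * t)) t := by
    intro t ht
    have h1 : HasDerivAt (fun t : ℝ => K * t) K t := by
      simpa using (hasDerivAt_id t).const_mul K
    have : HasDerivAt (fun t => f t * Real.exp (K * t)) (f' t * Real.exp (K * t) + f t * (Real.exp (K * t) * K)) t := (hf t ht).mul h1.exp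
    convert this using 1
    ring
  apply monotoneOn_of_deriv_nonneg hD
  · exact fun t ht => (hF t ht).continuousAt.continuousWithinAt
  · exact fun t ht => ((hF t (interior_subset ht)).differentiableAt).differentiableWithinAt
  · intro t ht
    rw [(hF t (interior_subset ht)).deriv]
    exact mul_nonneg (hineq t ht) (Real.exp_pos _).le

lemma aux_anti (f f' : ℝ → ℝ) (D : Set ℝ) (hD : Convex ℝ D)
    (hf : ∀ t ∈ D, HasDerivAt f (f' t) t)
    (hineq : ∀ t ∈ interior D, f' t ≤ 0) :
    AntitoneOn f D := by
  apply antitoneOn_of_deriv_nonpos hD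
  · exact fun t ht => (hf t ht).continuousAt.continuousWithinAt
  · exact fun t ht => ((hf t (interior_subset ht)).differentiableAt).differentiableWithinAt
  · intro t ht
    rw [(hf t (interior_subset ht)).deriv]
    exact hineq t ht


lemma aux_pos (γ G₀ B₀ : ℝ) (g b : ℝ → ℝ) (u n : ℝ → ℝ)
    (hγ : 0 < γ)
    (hg0 : g 0 = 0)
    (hgnonneg : ∀ s ∈ Ici (0:ℝ), 0 ≤ g s)
    (hgbd : ∀ s ∈ Ici (0:ℝ), g s ≤ G₀)
    (hb0 : b 0 = B₀) (hB₀ : 0 < B₀)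
    (hbpos : ∀ s ∈ Ici (0:ℝ), 0 < b s)
    (hbanti : StrictAntiOn b (Ici 0))
    (hu : ∀ t ∈ Ici (0:ℝ),
      HasDerivAt u (g (u t) * n t * u t - b (n t) * u t) t)
    (hn : ∀ t ∈ Ici (0:ℝ),
      HasDerivAt n (-(γ * g (u t) * n t * u t)) t)
    (hu0 : 0 < u 0) (hn0 : 0 < n 0) :
    ∀ t ∈ Ici (0:ℝ), 0 < u t ∧ 0 < n t := by
  obtain ⟨M, hMdef⟩ : ∃ M : ℝ, M = u 0 + n 0 / γ := ⟨_, rfl⟩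
  have hM : 0 < M := by rw [hMdef]; positivity
  have hG₀ : 0 ≤ G₀ := by have := hgbd 0 (mem_Ici.mpr le_rfl); linarith [hg0]
  by_contra hcon
  push_neg at hcon
  obtain ⟨t₁, ht₁0, ht₁⟩ := hcon
  set Bad : Set ℝ := (Ici 0 ∩ u ⁻¹' Iic 0) ∪ (Ici 0 ∩ n ⁻¹' Iic 0) with hBad
  have hucont : ContinuousOn u (Ici 0) :=
    fun t ht => (hu t ht).continuousAt.continuousWithinAt
  have hncont : ContinuousOn n (Ici 0) :=
    fun t ht => (hn t ht).continuousAt.continuousWithinAt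
  have hclosed : IsClosed Bad :=
    (hucont.preimage_isClosed_of_isClosed isClosed_Ici isClosed_Iic).union
      (hncont.preimage_isClosed_of_isClosed isClosed_Ici isClosed_Iic)
  have hne : Bad.Nonempty := by
    refine ⟨t₁, ?_⟩
    rcases le_or_gt (u t₁) 0 with h | h
    · exact Or.inl ⟨ht₁0, mem_preimage.mpr (mem_Iic.mpr h)⟩
    · exact Or.inr ⟨ht₁0, mem_preimage.mpr (mem_Iic.mpr (ht₁ h))⟩
  have hbdd : BddBelow Bad := ⟨0, fun t ht => by
    rcases ht with ⟨h, _⟩ | ⟨h, _⟩ <;> exact h⟩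
  set T₀ : ℝ := sInf Bad with hT₀def
  have hT₀mem : T₀ ∈ Bad := hclosed.csInf_mem hne hbdd
  have hT₀0 : 0 ≤ T₀ := by
    rcases hT₀mem with ⟨h, _⟩ | ⟨h, _⟩ <;> exact h
  have hT₀bad : u T₀ ≤ 0 ∨ n T₀ ≤ 0 := by
    rcases hT₀mem with ⟨_, h⟩ | ⟨_, h⟩
    · exact Or.inl h
    · exact Or.inr h
  have hT₀pos : 0 < T₀ := by
    rcases hT₀0.lt_or_eq with h | h
    · exact h
    · exfalso; rw [← h] at hT₀bad
      rcases hT₀bad with h' | h' <;> linarith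
  have hbefore : ∀ t ∈ Ico (0:ℝ) T₀, 0 < u t ∧ 0 < n t := by
    intro t ⟨h0, hlt⟩
    by_contra h
    have : t ∈ Bad := by
      rcases not_and_or.mp h with h' | h'
      · exact Or.inl ⟨h0, mem_preimage.mpr (mem_Iic.mpr (not_lt.mp h'))⟩
      · exact Or.inr ⟨h0, mem_preimage.mpr (mem_Iic.mpr (not_lt.mp h'))⟩
    exact absurd (csInf_le hbdd this) (not_le.mpr hlt)
  have hDsub : Icc (0:ℝ) T₀ ⊆ Ici 0 := fun t ht => ht.1
  have hint : interior (Icc (0:ℝ) T₀) = Ioo 0 T₀ := interior_Icc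
  -- w := u + n/γ is antitone on [0, T₀]
  have hw_deriv : ∀ t ∈ Icc (0:ℝ) T₀,
      HasDerivAt (fun t => u t + n t / γ) (-(b (n t) * u t)) t := by
    intro t ht
    have : HasDerivAt (fun t => u t + n t / γ) ((g (u t) * n t * u t - b (n t) * u t) + -(γ * g (u t) * n t * u t) / γ) t := (hu t (hDsub ht)).add ((hn t (hDsub ht)).div_const γ)
    convert this using 1
    field_simp
    ring
  have hw_anti : AntitoneOn (fun t => u t + n t / γ) (Icc 0 T₀) := by
    apply aux_anti _ _ _ (convex_Icc _ _) hw_deriv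
    intro t ht
    rw [hint] at ht
    obtain ⟨hut, hnt⟩ := hbefore t ⟨ht.1.le, ht.2⟩
    have hb' := hbpos (n t) hnt.le
    nlinarith
  have huM : ∀ t ∈ Ico (0:ℝ) T₀, u t ≤ M := by
    intro t ht
    have h1 := hw_anti (left_mem_Icc.mpr hT₀0) ⟨ht.1, ht.2.le⟩ ht.1
    have hnt := (hbefore t ht).2
    have h2 : 0 ≤ n t / γ := by positivity
    simp only at h1
    rw [hMdef]
    linarith
  -- n is bounded below by exponential on [0, T₀]
  have hn_mono : MonotoneOn (fun t => n t * Real.exp ((γ * G₀ * M) * t)) (Icc 0 T₀) := by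
    apply aux_expMono _ _ (fun t => -(γ * g (u t) * n t * u t)) _ (convex_Icc _ _)
      (fun t ht => hn t (hDsub ht))
    intro t ht
    rw [hint] at ht
    have ht' : t ∈ Ico (0:ℝ) T₀ := ⟨ht.1.le, ht.2⟩
    obtain ⟨hut, hnt⟩ := hbefore t ht'
    have h1 : g (u t) ≤ G₀ := hgbd _ hut.le
    have h2 : 0 ≤ g (u t) := hgnonneg _ hut.le
    have h3 : u t ≤ M := huM t ht'
    have h4 : g (u t) * u t ≤ G₀ * M := mul_le_mul h1 h3 hut.le hG₀
    have h5 := mul_le_mul_of_nonneg_left h4 (mul_pos hγ hnt).le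
    nlinarith [h5]
  have hnT₀ : 0 < n T₀ := by
    have h1 := hn_mono (left_mem_Icc.mpr hT₀0) (right_mem_Icc.mpr hT₀0) hT₀0
    simp only [mul_zero, Real.exp_zero, mul_one] at h1
    by_contra h
    push_neg at h
    have : n T₀ * Real.exp ((γ * G₀ * M) * T₀) ≤ 0 :=
      mul_nonpos_of_nonpos_of_nonneg h (Real.exp_pos _).le
    linarith
  -- u is bounded below by exponential on [0, T₀]
  have hu_mono : MonotoneOn (fun t => u t * Real.exp (B₀ * t)) (Icc 0 T₀) := by
    apply aux_expMono _ _ (fun t => g (u t) * n t * u t - b (n t) * u t) _ (convex_Icc _ _)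
      (fun t ht => hu t (hDsub ht))
    intro t ht
    rw [hint] at ht
    obtain ⟨hut, hnt⟩ := hbefore t ⟨ht.1.le, ht.2⟩
    have h1 : b (n t) ≤ B₀ := by
      rw [← hb0]
      exact (hbanti (mem_Ici.mpr le_rfl) hnt.le hnt).le
    have h2 : 0 ≤ g (u t) := hgnonneg _ hut.le
    nlinarith [mul_nonneg (mul_nonneg h2 hnt.le) hut.le,
      mul_nonneg (sub_nonneg.mpr h1) hut.le]
  have huT₀ : 0 < u T₀ := by
    have h1 := hu_mono (left_mem_Icc.mpr hT₀0) (right_mem_Icc.mpr hT₀0) hT₀0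
    simp only [mul_zero, Real.exp_zero, mul_one] at h1
    by_contra h
    push_neg at h
    have : u T₀ * Real.exp (B₀ * T₀) ≤ 0 :=
      mul_nonpos_of_nonpos_of_nonneg h (Real.exp_pos _).le
    linarith
  rcases hT₀bad with h | h <;> linarith

lemma aux_limits (γ G₀ B₀ : ℝ) (g b : ℝ → ℝ) (u n : ℝ → ℝ)
    (hγ : 0 < γ)
    (hgnonneg : ∀ s ∈ Ici (0:ℝ), 0 ≤ g s)
    (hbc : ContinuousOn b (Ici 0)) (hb0 : b 0 = B₀) (hB₀ : 0 < B₀)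
    (hbpos : ∀ s ∈ Ici (0:ℝ), 0 < b s)
    (hbanti : StrictAntiOn b (Ici 0))
    (hu : ∀ t ∈ Ici (0:ℝ),
      HasDerivAt u (g (u t) * n t * u t - b (n t) * u t) t)
    (hn : ∀ t ∈ Ici (0:ℝ),
      HasDerivAt n (-(γ * g (u t) * n t * u t)) t)
    (hu0 : 0 < u 0) (hn0 : 0 < n 0)
    (hpos : ∀ t ∈ Ici (0:ℝ), 0 < u t ∧ 0 < n t) :
    Tendsto u atTop (nhds 0) ∧
    ∃ ninf : ℝ, 0 ≤ ninf ∧ Tendsto n atTop (nhds ninf) := by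
  have hucont : ContinuousOn u (Ici 0) :=
    fun t ht => (hu t ht).continuousAt.continuousWithinAt
  have hncont : ContinuousOn n (Ici 0) :=
    fun t ht => (hn t ht).continuousAt.continuousWithinAt
  have hintIci : interior (Ici (0:ℝ)) = Ioi 0 := interior_Ici
  -- n is antitone on [0, ∞)
  have hn_anti : AntitoneOn n (Ici 0) := by
    apply aux_anti n (fun t => -(γ * g (u t) * n t * u t)) _ (convex_Ici _)
      (fun t ht => hn t ht)
    intro t ht
    rw [hintIci] at ht
    obtain ⟨hut, hnt⟩ := hpos t (mem_Ici.mpr (le_of_lt ht))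
    have h2 : 0 ≤ g (u t) := hgnonneg _ hut.le
    have h3 := mul_nonneg (mul_nonneg (mul_nonneg hγ.le h2) hnt.le) hut.le
    linarith
  -- the n-limit
  have hNanti : Antitone (fun t : ℝ => n (max t 0)) := by
    intro s t hst
    exact hn_anti (le_max_right s 0) (le_max_right t 0) (max_le_max hst le_rfl)
  have hNbdd : BddBelow (range fun t : ℝ => n (max t 0)) := by
    refine ⟨0, ?_⟩
    rintro x ⟨t, rfl⟩
    exact (hpos _ (le_max_right t 0)).2.le
  have hNten := tendsto_atTop_ciInf hNanti hNbdd
  have hEq : (fun t : ℝ => n (max t 0)) =ᶠ[atTop] n := by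
    filter_upwards [eventually_ge_atTop (0:ℝ)] with t ht
    rw [max_eq_left ht]
  have hn_lim : Tendsto n atTop (nhds (⨅ t : ℝ, n (max t 0))) := hNten.congr' hEq
  have hninf_nonneg : 0 ≤ ⨅ t : ℝ, n (max t 0) :=
    le_ciInf fun t => (hpos _ (le_max_right t 0)).2.le
  refine ⟨?_, ⟨_, hninf_nonneg, hn_lim⟩⟩
  -- now u → 0
  have hbanti' : AntitoneOn b (Ici 0) := hbanti.antitoneOn
  -- u·e^{B₀ t} is monotone on [0, ∞)
  have hu_mono : MonotoneOn (fun t => u t * Real.exp (B₀ * t)) (Ici 0) := by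
    apply aux_expMono _ _ (fun t => g (u t) * n t * u t - b (n t) * u t) _ (convex_Ici _)
      (fun t ht => hu t ht)
    intro t ht
    rw [hintIci] at ht
    obtain ⟨hut, hnt⟩ := hpos t (mem_Ici.mpr (le_of_lt ht))
    have h1 : b (n t) ≤ B₀ := by
      rw [← hb0]; exact hbanti' (mem_Ici.mpr le_rfl) (mem_Ici.mpr hnt.le) hnt.le
    have h2 : 0 ≤ g (u t) := hgnonneg _ hut.le
    nlinarith [mul_nonneg (mul_nonneg h2 hnt.le) hut.le,
      mul_nonneg (sub_nonneg.mpr h1) hut.le]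
  -- integrability machinery
  have hu_int : ∀ a c : ℝ, 0 ≤ a → a ≤ c → IntervalIntegrable u volume a c := by
    intro a c ha hac
    apply ContinuousOn.intervalIntegrable
    apply hucont.mono
    rw [uIcc_of_le hac]
    exact fun s hs => le_trans ha hs.1
  have hbnu_cont : ContinuousOn (fun s => b (n s) * u s) (Ici 0) := by
    apply ContinuousOn.mul _ hucont
    exact hbc.comp hncont fun s hs => (hpos s hs).2.le
  have hbnu_int : ∀ c : ℝ, 0 ≤ c → IntervalIntegrable (fun s => b (n s) * u s) volume 0 c := by
    intro c hc
    apply ContinuousOn.intervalIntegrable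
    apply hbnu_cont.mono
    rw [uIcc_of_le hc]
    exact fun s hs => hs.1
  -- w := u + n/γ and the fundamental theorem
  have hw_deriv : ∀ t ∈ Ici (0:ℝ),
      HasDerivAt (fun t => u t + n t / γ) (-(b (n t) * u t)) t := by
    intro t ht
    have : HasDerivAt (fun t => u t + n t / γ) ((g (u t) * n t * u t - b (n t) * u t) + -(γ * g (u t) * n t * u t) / γ) t := (hu t ht).add ((hn t ht).div_const γ)
    convert this using 1
    field_simp
    ring
  have hFTC : ∀ T : ℝ, 0 ≤ T →
      (∫ s in (0:ℝ)..T, -(b (n s) * u s)) = (u T + n T / γ) - (u 0 + n 0 / γ) := by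
    intro T hT
    apply intervalIntegral.integral_eq_sub_of_hasDerivAt
    · intro t ht
      rw [uIcc_of_le hT] at ht
      exact hw_deriv t ht.1
    · exact (hbnu_int T hT).neg
  -- bound on I T := ∫₀ᵀ u
  have hb_n0 : 0 < b (n 0) := hbpos _ hn0.le
  have hIbd : ∀ T : ℝ, 0 ≤ T →
      (∫ s in (0:ℝ)..T, u s) ≤ (u 0 + n 0 / γ) / b (n 0) := by
    intro T hT
    have h1 : (∫ s in (0:ℝ)..T, b (n 0) * u s) ≤ ∫ s in (0:ℝ)..T, b (n s) * u s := by
      apply intervalIntegral.integral_mono_on hT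
        ((hu_int 0 T le_rfl hT).const_mul _) (hbnu_int T hT)
      intro s hs
      have hns : n s ≤ n 0 := hn_anti (mem_Ici.mpr le_rfl) (mem_Ici.mpr hs.1) hs.1
      have : b (n 0) ≤ b (n s) :=
        hbanti' (mem_Ici.mpr (hpos s hs.1).2.le) (mem_Ici.mpr hn0.le) hns
      exact mul_le_mul_of_nonneg_right this (hpos s hs.1).1.le
    have h2 : (∫ s in (0:ℝ)..T, b (n s) * u s) = (u 0 + n 0 / γ) - (u T + n T / γ) := by
      have := hFTC T hT
      rw [intervalIntegral.integral_neg] at this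
      linarith
    rw [intervalIntegral.integral_const_mul] at h1
    have h3 : 0 ≤ u T + n T / γ := by
      obtain ⟨h4, h5⟩ := hpos T hT
      positivity
    rw [le_div_iff₀ hb_n0, mul_comm]
    calc b (n 0) * ∫ s in (0:ℝ)..T, u s ≤ (u 0 + n 0 / γ) - (u T + n T / γ) := by
          rw [← h2]; linarith [h1]
      _ ≤ u 0 + n 0 / γ := by linarith
    -- note: b(n0)*I ≤ ... ✓
  -- I is "monotone" and bounded, so converges
  have hIadd : ∀ a c : ℝ, 0 ≤ a → a ≤ c →
      (∫ s in (0:ℝ)..c, u s) - (∫ s in (0:ℝ)..a, u s) = ∫ s in a..c, u s := by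
    intro a c ha hac
    have := intervalIntegral.integral_add_adjacent_intervals
      (hu_int 0 a le_rfl ha) (hu_int a c ha hac)
    linarith
  have hJmono : Monotone (fun t : ℝ => ∫ s in (0:ℝ)..(max t 0), u s) := by
    intro s t hst
    have h1 : (0:ℝ) ≤ max s 0 := le_max_right _ _
    have h2 : max s 0 ≤ max t 0 := max_le_max hst le_rfl
    have h3 := hIadd _ _ h1 h2
    have h4 : 0 ≤ ∫ x in (max s 0)..(max t 0), u x := by
      apply intervalIntegral.integral_nonneg h2
      intro x hx
      exact (hpos x (le_trans h1 hx.1)).1.le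
    simp only
    linarith
  have hJbdd : BddAbove (range fun t : ℝ => ∫ s in (0:ℝ)..(max t 0), u s) := by
    refine ⟨(u 0 + n 0 / γ) / b (n 0), ?_⟩
    rintro x ⟨t, rfl⟩
    exact hIbd _ (le_max_right t 0)
  have hJten := tendsto_atTop_ciSup hJmono hJbdd
  set L : ℝ := ⨆ t : ℝ, ∫ s in (0:ℝ)..(max t 0), u s with hL
  have hIEq : (fun t : ℝ => ∫ s in (0:ℝ)..(max t 0), u s) =ᶠ[atTop]
      (fun t : ℝ => ∫ s in (0:ℝ)..t, u s) := by
    filter_upwards [eventually_ge_atTop (0:ℝ)] with t ht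
    rw [max_eq_left ht]
  have hIten : Tendsto (fun t : ℝ => ∫ s in (0:ℝ)..t, u s) atTop (nhds L) :=
    hJten.congr' hIEq
  have hIten1 : Tendsto (fun t : ℝ => ∫ s in (0:ℝ)..(t+1), u s) atTop (nhds L) :=
    hIten.comp (tendsto_atTop_add_const_right atTop 1 tendsto_id)
  have hdiff : Tendsto (fun t : ℝ => (∫ s in (0:ℝ)..(t+1), u s) - ∫ s in (0:ℝ)..t, u s)
      atTop (nhds 0) := by
    have := hIten1.sub hIten
    simpa using this
  -- key pointwise bound
  have hkey : ∀ t : ℝ, 0 ≤ t →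
      u t * Real.exp (-B₀) ≤ (∫ s in (0:ℝ)..(t+1), u s) - ∫ s in (0:ℝ)..t, u s := by
    intro t ht
    rw [hIadd t (t+1) ht (by linarith)]
    have hstep : ∀ s ∈ Icc t (t+1), u t * Real.exp (-B₀) ≤ u s := by
      intro s hs
      have hs0 : (0:ℝ) ≤ s := le_trans ht hs.1
      have hm := hu_mono (mem_Ici.mpr ht) (mem_Ici.mpr hs0) hs.1
      simp only at hm
      have hut : 0 ≤ u t := (hpos t ht).1.le
      have e1 : u t * Real.exp (-B₀) * Real.exp (B₀ * s) = u t * Real.exp (B₀ * s - B₀) := by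
        rw [mul_assoc, ← Real.exp_add]; ring_nf
      have e2 : u t * Real.exp (B₀ * s - B₀) ≤ u t * Real.exp (B₀ * t) := by
        apply mul_le_mul_of_nonneg_left _ hut
        apply Real.exp_le_exp.mpr
        nlinarith [hs.2]
      have : u t * Real.exp (-B₀) * Real.exp (B₀ * s) ≤ u s * Real.exp (B₀ * s) := by
        rw [e1]; exact le_trans e2 hm
      exact le_of_mul_le_mul_right this (Real.exp_pos _)
    calc u t * Real.exp (-B₀)
        = ∫ _ in t..(t+1), u t * Real.exp (-B₀) := by
          rw [intervalIntegral.integral_const]; simp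
      _ ≤ ∫ s in t..(t+1), u s := by
          apply intervalIntegral.integral_mono_on (by linarith)
            intervalIntegrable_const (hu_int t (t+1) ht (by linarith)) hstep
  -- squeeze
  apply squeeze_zero' (f := u)
    (g := fun t => Real.exp B₀ * ((∫ s in (0:ℝ)..(t+1), u s) - ∫ s in (0:ℝ)..t, u s))
  · filter_upwards [eventually_ge_atTop (0:ℝ)] with t ht
    exact (hpos t ht).1.le
  · filter_upwards [eventually_ge_atTop (0:ℝ)] with t ht
    have h1 := hkey t ht
    have h2 := mul_le_mul_of_nonneg_left h1 (Real.exp_pos B₀).le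
    calc u t = Real.exp B₀ * (u t * Real.exp (-B₀)) := by
          rw [← mul_assoc, mul_comm (Real.exp B₀) (u t), mul_assoc, ← Real.exp_add]
          simp
      _ ≤ _ := h2
  · have := hdiff.const_mul (Real.exp B₀)
    simpa using this


/-- Phase-plane behavior of the kinetic system in the open first quadrant:
positivity is preserved, `u(t) → 0` and `n(t) → n_∞ ≥ 0` as `t → ∞`. -/
theorem stmt_7 (γ G₀ B₀ : ℝ) (g b : ℝ → ℝ) (u n : ℝ → ℝ)
    (hγ : 0 < γ)
    (hgc : ContinuousOn g (Ici 0)) (hg0 : g 0 = 0)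
    (hgmono : StrictMonoOn g (Ici 0))
    (hgnonneg : ∀ s ∈ Ici (0:ℝ), 0 ≤ g s)
    (hgbd : ∀ s ∈ Ici (0:ℝ), g s ≤ G₀)
    (hbc : ContinuousOn b (Ici 0)) (hb0 : b 0 = B₀) (hB₀ : 0 < B₀)
    (hbpos : ∀ s ∈ Ici (0:ℝ), 0 < b s)
    (hbanti : StrictAntiOn b (Ici 0))
    (hu : ∀ t ∈ Ici (0:ℝ),
      HasDerivAt u (g (u t) * n t * u t - b (n t) * u t) t)
    (hn : ∀ t ∈ Ici (0:ℝ),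
      HasDerivAt n (-(γ * g (u t) * n t * u t)) t)
    (hu0 : 0 < u 0) (hn0 : 0 < n 0) :
    (∀ t ∈ Ici (0:ℝ), 0 < u t ∧ 0 < n t) ∧
    Tendsto u atTop (nhds 0) ∧
    ∃ ninf : ℝ, 0 ≤ ninf ∧ Tendsto n atTop (nhds ninf) := by
  have hpos := aux_pos γ G₀ B₀ g b u n hγ hg0 hgnonneg hgbd hb0 hB₀ hbpos hbanti hu hn hu0 hn0
  obtain ⟨h1, h2⟩ := aux_limits γ G₀ B₀ g b u n hγ hgnonneg hbc hb0 hB₀ hbpos hbanti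
    hu hn hu0 hn0 hpos
  exact ⟨hpos, h1, h2⟩
end

section
/- Let U, N : [0,∞) → [0,∞) be differentiable with U' = P − Q and N' = −γ P, where P, Q : [0,∞) → [0,∞) are continuous, γ > 0, and Q(t) ≥ β U(t) for a constant β > 0. Then U ∈ L¹(0,∞) and U(t) → 0 as t → ∞, and N(t) converges to a finite limit N_∞ ≥ 0 as t → ∞. -/
/-!
A function with nonpositive derivative that is bounded below converges at infinity, and its
derivative is then integrable. Applied to `N` (derivative `-γP`) this gives the limit of `N` and
`P ∈ L¹`; applied to the Lyapunov function `U + N / γ` (derivative `-Q`) it gives `Q ∈ L¹`, hence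
`U ∈ L¹` since `βU ≤ Q`. Then `U' = P - Q ∈ L¹` as well, which forces `U → 0`.
-/

open Set Filter MeasureTheory Topology

theorem AntitoneOn.exists_tendsto_atTop_of_le {f : ℝ → ℝ} {a c : ℝ} (hf : AntitoneOn f (Ici a))
    (hc : ∀ t ∈ Ici a, c ≤ f t) : ∃ l, c ≤ l ∧ Tendsto f atTop (𝓝 l) := by
  set g : ℝ → ℝ := fun t => f (max t a)
  have hg_anti : Antitone g := fun s t hst =>
    hf (le_max_right s a) (le_max_right t a) (max_le_max_right a hst)
  have hg_bdd : BddBelow (range g) := ⟨c, by rintro _ ⟨t, rfl⟩; exact hc _ (le_max_right t a)⟩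
  have hfg : g =ᶠ[atTop] f := by
    filter_upwards [eventually_ge_atTop a] with t ht
    simp only [g, max_eq_left ht]
  have hlim := (tendsto_atTop_ciInf hg_anti hg_bdd).congr' hfg
  refine ⟨_, ge_of_tendsto hlim ?_, hlim⟩
  filter_upwards [eventually_ge_atTop a] with t ht using hc t ht

theorem exists_tendsto_atTop_of_hasDerivAt_nonpos {f f' : ℝ → ℝ} {a c : ℝ}
    (hf : ∀ t ∈ Ici a, HasDerivAt f (f' t) t) (hf' : ∀ t ∈ Ioi a, f' t ≤ 0)
    (hc : ∀ t ∈ Ici a, c ≤ f t) : ∃ l, c ≤ l ∧ Tendsto f atTop (𝓝 l) := by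
  refine AntitoneOn.exists_tendsto_atTop_of_le ?_ hc
  refine antitoneOn_of_hasDerivWithinAt_nonpos (convex_Ici a)
    (fun t ht => (hf t ht).continuousAt.continuousWithinAt) (fun t ht => ?_) (by simpa using hf')
  rw [interior_Ici] at ht ⊢
  exact (hf t (mem_Ici_of_Ioi ht)).hasDerivWithinAt

theorem integrableOn_Ioi_deriv_of_nonpos_of_le {f f' : ℝ → ℝ} {a c : ℝ}
    (hf : ∀ t ∈ Ici a, HasDerivAt f (f' t) t) (hf' : ∀ t ∈ Ioi a, f' t ≤ 0)
    (hc : ∀ t ∈ Ici a, c ≤ f t) : IntegrableOn f' (Ioi a) :=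
  have ⟨_, _, hlim⟩ := exists_tendsto_atTop_of_hasDerivAt_nonpos hf hf' hc
  integrableOn_Ioi_deriv_of_nonpos' hf hf' hlim

theorem IntegrableOn.of_nonneg_of_const_mul_le {f g : ℝ → ℝ} {s : Set ℝ} {μ : Measure ℝ} {β : ℝ}
    (hg : IntegrableOn g s μ) (hs : MeasurableSet s) (hf : ContinuousOn f s) (hβ : 0 < β)
    (hf_nonneg : ∀ t ∈ s, 0 ≤ f t) (hfg : ∀ t ∈ s, β * f t ≤ g t) : IntegrableOn f s μ := by
  refine (hg.const_mul β⁻¹).mono' (hf.aestronglyMeasurable hs) ?_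
  filter_upwards [ae_restrict_mem hs] with t ht
  rw [Real.norm_of_nonneg (hf_nonneg t ht), le_inv_mul_iff₀ hβ]
  exact hfg t ht

theorem stmt_9_general (γ β : ℝ) (hγ : 0 < γ) (hβ : 0 < β) (U N P Q : ℝ → ℝ)
    (hUpos : ∀ t ∈ Ici (0:ℝ), 0 ≤ U t) (hNpos : ∀ t ∈ Ici (0:ℝ), 0 ≤ N t)
    (hPpos : ∀ t ∈ Ici (0:ℝ), 0 ≤ P t)
    (hU : ∀ t ∈ Ici (0:ℝ), HasDerivAt U (P t - Q t) t)
    (hN : ∀ t ∈ Ici (0:ℝ), HasDerivAt N (-(γ * P t)) t)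
    (hQU : ∀ t ∈ Ici (0:ℝ), β * U t ≤ Q t) :
    IntegrableOn U (Ioi 0) ∧
    Tendsto U atTop (nhds 0) ∧
    ∃ Ninf : ℝ, 0 ≤ Ninf ∧ Tendsto N atTop (nhds Ninf) := by
  have hN_deriv_nonpos : ∀ t ∈ Ioi (0:ℝ), -(γ * P t) ≤ 0 := fun t ht =>
    neg_nonpos.2 (mul_nonneg hγ.le (hPpos t (mem_Ici_of_Ioi ht)))
  obtain ⟨Ninf, hNinf, hNlim⟩ := exists_tendsto_atTop_of_hasDerivAt_nonpos hN hN_deriv_nonpos hNpos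
  have hP_int : IntegrableOn P (Ioi 0) := by
    simpa [IntegrableOn, hγ.ne'] using
      (integrableOn_Ioi_deriv_of_nonpos_of_le hN hN_deriv_nonpos hNpos).neg.const_mul γ⁻¹
  have hW : ∀ t ∈ Ici (0:ℝ), HasDerivAt (fun s => U s + N s / γ) (-Q t) t := fun t ht =>
    ((hU t ht).add ((hN t ht).div_const γ)).congr_deriv (by field_simp; ring)
  have hQ_int : IntegrableOn Q (Ioi 0) := by
    have hW_deriv_nonpos : ∀ t ∈ Ioi (0:ℝ), -Q t ≤ 0 := fun t ht => neg_nonpos.2 <|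
      (mul_nonneg hβ.le (hUpos t (mem_Ici_of_Ioi ht))).trans (hQU t (mem_Ici_of_Ioi ht))
    have hW_nonneg : ∀ t ∈ Ici (0:ℝ), 0 ≤ U t + N t / γ := fun t ht =>
      add_nonneg (hUpos t ht) (div_nonneg (hNpos t ht) hγ.le)
    simpa using (integrableOn_Ioi_deriv_of_nonpos_of_le hW hW_deriv_nonpos hW_nonneg).neg
  have hU_int : IntegrableOn U (Ioi 0) :=
    IntegrableOn.of_nonneg_of_const_mul_le hQ_int measurableSet_Ioi
      (fun t ht => (hU t (mem_Ici_of_Ioi ht)).continuousAt.continuousWithinAt) hβ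
      (fun t ht => hUpos t (mem_Ici_of_Ioi ht)) (fun t ht => hQU t (mem_Ici_of_Ioi ht))
  have hU_lim : Tendsto U atTop (𝓝 0) := tendsto_zero_of_hasDerivAt_of_integrableOn_Ioi
    (fun t ht => hU t (mem_Ici_of_Ioi ht)) (hP_int.sub hQ_int) hU_int
  exact ⟨hU_int, hU_lim, Ninf, hNinf, hNlim⟩

/-- Abstract mass convergence: if `U' = P − Q`, `N' = −γP` with `P, Q ≥ 0`,
`Q ≥ βU`, then `U ∈ L¹(0,∞)`, `U(t) → 0`, and `N(t)` converges. -/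
theorem stmt_9 (γ β : ℝ) (hγ : 0 < γ) (hβ : 0 < β) (U N P Q : ℝ → ℝ)
    (hUpos : ∀ t ∈ Ici (0:ℝ), 0 ≤ U t) (hNpos : ∀ t ∈ Ici (0:ℝ), 0 ≤ N t)
    (hP : Continuous P) (hQ : Continuous Q)
    (hPpos : ∀ t ∈ Ici (0:ℝ), 0 ≤ P t) (hQpos : ∀ t ∈ Ici (0:ℝ), 0 ≤ Q t)
    (hU : ∀ t ∈ Ici (0:ℝ), HasDerivAt U (P t - Q t) t)
    (hN : ∀ t ∈ Ici (0:ℝ), HasDerivAt N (-(γ * P t)) t)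
    (hQU : ∀ t ∈ Ici (0:ℝ), β * U t ≤ Q t) :
    IntegrableOn U (Ioi 0) ∧
    Tendsto U atTop (nhds 0) ∧
    ∃ Ninf : ℝ, 0 ≤ Ninf ∧ Tendsto N atTop (nhds Ninf) :=
  stmt_9_general γ β hγ hβ U N P Q hUpos hNpos hPpos hU hN hQU
end

section
/- Let 0 < r₁ < r₂ and define φ : [0,∞) → ℝ by φ(r) = r² for 0 ≤ r ≤ r₁, φ(r) = a₁r² + a₂r + a₃ for r₁ ≤ r ≤ r₂, and φ(r) = r₁r₂ for r > r₂, where a₁ = −r₁/(r₂−r₁), a₂ = 2r₁r₂/(r₂−r₁), a₃ = −r₁²r₂/(r₂−r₁). Then φ is continuously differentiable on [0,∞), φ is nonnegative and nondecreasing, and the radial function Φ(x) = φ(|x|) on ℝ² satisfies ΔΦ(x) = 4 for |x| < r₁ and ΔΦ(x) ≤ 2 for |x| > r₁ (wherever ΔΦ is defined). -/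
/-!
Writing the middle piece as `r₁r₂ - r₁(r₂ - r)²/(r₂ - r₁)` shows that `φ` glues in a `C¹` way: its
derivative is `2r`, then `2r₁(r₂ - r)/(r₂ - r₁)`, then `0`, which is continuous and nonnegative on
`[0, ∞)`.

For a radial function `Φ = g ∘ ‖·‖` and `x ≠ 0`, the second derivative along `e` is
`g'(r)/r (‖e‖² - ⟪x̂, e⟫²) + g''(r) ⟪x̂, e⟫²`; summing over an orthonormal basis of an
`n`-dimensional space gives `ΔΦ = g'' + (n - 1) g'/r`. On the annulus `r₁ < r < r₂` this equals
`2r₁((n - 1)(r₂ - r) - r)/((r₂ - r₁) r) ≤ 2(n - 1)`, and it vanishes for `r > r₂`. On the disc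
`Φ = ‖x‖²`, whose Laplacian is `2n` everywhere, including at the origin.
-/

open Set Filter Topology
open scoped RealInnerProductSpace

section Piecewise

variable {f g f' g' : ℝ → ℝ} {a : ℝ}

theorem hasDerivAt_ite_le (hf : ∀ x, HasDerivAt f (f' x) x) (hg : ∀ x, HasDerivAt g (g' x) x)
    (ha : f a = g a) (ha' : f' a = g' a) (x : ℝ) :
    HasDerivAt (fun t => if t ≤ a then f t else g t) (if x ≤ a then f' x else g' x) x := by
  rcases lt_trichotomy x a with hx | rfl | hx
  · rw [if_pos hx.le]
    exact (hf x).congr_of_eventuallyEq <| (eventually_le_nhds hx).mono fun t ht => if_pos ht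
  · rw [if_pos le_rfl, ← hasDerivWithinAt_univ, ← Iic_union_Ici (a := x)]
    refine HasDerivWithinAt.union ?_ ?_
    · exact (hf x).hasDerivWithinAt.congr (fun t ht => if_pos (mem_Iic.1 ht)) (if_pos le_rfl)
    · refine ha' ▸ (hg x).hasDerivWithinAt.congr (fun t ht => ?_) (by simp [ha])
      rcases (mem_Ici.1 ht).eq_or_lt with rfl | ht
      · simp [ha]
      · simp [not_le.2 ht]
  · rw [if_neg (not_le.2 hx)]
    exact (hg x).congr_of_eventuallyEq <|
      (eventually_gt_nhds hx).mono fun t ht => if_neg (not_le.2 ht)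

end Piecewise

-- The paper's middle piece `a₁r² + a₂r + a₃`, with the square completed at `r₂`.
noncomputable def truncWeight (r₁ r₂ r : ℝ) : ℝ :=
  if r ≤ r₁ then r ^ 2 else if r ≤ r₂ then r₁ * r₂ - r₁ * (r₂ - r) ^ 2 / (r₂ - r₁) else r₁ * r₂

noncomputable def truncWeightDeriv (r₁ r₂ r : ℝ) : ℝ :=
  if r ≤ r₁ then 2 * r else if r ≤ r₂ then 2 * r₁ * (r₂ - r) / (r₂ - r₁) else 0

section TruncWeight

variable {r₁ r₂ : ℝ}

theorem hasDerivAt_truncWeight (h : r₁ < r₂) (r : ℝ) :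
    HasDerivAt (truncWeight r₁ r₂) (truncWeightDeriv r₁ r₂ r) r := by
  have hne : r₂ - r₁ ≠ 0 := sub_ne_zero.2 h.ne'
  have hsq (s : ℝ) : HasDerivAt (· ^ 2) (2 * s) s := by simpa using hasDerivAt_pow 2 s
  have hcap (s : ℝ) : HasDerivAt (fun t => r₁ * r₂ - r₁ * (r₂ - t) ^ 2 / (r₂ - r₁))
      (2 * r₁ * (r₂ - s) / (r₂ - r₁)) s :=
    ((((hsq (r₂ - s)).comp s ((hasDerivAt_id s).const_sub r₂)).const_mul r₁).div_const
      (r₂ - r₁) |>.const_sub (r₁ * r₂)).congr_deriv (by ring)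
  refine hasDerivAt_ite_le hsq
    (hasDerivAt_ite_le hcap (fun s => hasDerivAt_const s (r₁ * r₂)) (by simp) (by simp)) ?_ ?_ r
  · simp only [if_pos h.le]; field_simp; ring
  · simp only [if_pos h.le]; field_simp

theorem continuous_truncWeightDeriv (h : r₁ < r₂) : Continuous (truncWeightDeriv r₁ r₂) := by
  refine Continuous.if_le (by fun_prop : Continuous fun r : ℝ => 2 * r) ?_ continuous_id
    continuous_const fun r hr => ?_
  · refine Continuous.if_le (by fun_prop) (by fun_prop) continuous_id continuous_const ?_
    rintro r rfl
    simp
  · rw [hr, if_pos h.le]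
    field_simp [sub_ne_zero.2 h.ne']

theorem contDiff_truncWeight (h : r₁ < r₂) : ContDiff ℝ 1 (truncWeight r₁ r₂) :=
  contDiff_one_iff_deriv.2 ⟨fun r => (hasDerivAt_truncWeight h r).differentiableAt,
    funext (fun r => (hasDerivAt_truncWeight h r).deriv) ▸ continuous_truncWeightDeriv h⟩

theorem truncWeightDeriv_nonneg (h₁ : 0 ≤ r₁) (h : r₁ ≤ r₂) {r : ℝ} (hr : 0 ≤ r) :
    0 ≤ truncWeightDeriv r₁ r₂ r := by
  unfold truncWeightDeriv
  split_ifs with h₁r h₂r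
  · positivity
  · exact div_nonneg (by nlinarith) (sub_nonneg.2 h)
  · exact le_rfl

theorem monotoneOn_truncWeight (h₁ : 0 ≤ r₁) (h : r₁ < r₂) :
    MonotoneOn (truncWeight r₁ r₂) (Ici 0) :=
  monotoneOn_of_hasDerivWithinAt_nonneg (convex_Ici 0)
    (contDiff_truncWeight h).continuous.continuousOn
    (fun r _ => (hasDerivAt_truncWeight h r).hasDerivWithinAt)
    (fun _ hr => truncWeightDeriv_nonneg h₁ h.le (interior_subset hr))

theorem truncWeight_nonneg (h₁ : 0 ≤ r₁) (h : r₁ < r₂) {r : ℝ} (hr : 0 ≤ r) :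
    0 ≤ truncWeight r₁ r₂ r := by
  have h0 : truncWeight r₁ r₂ 0 = 0 := by simp [truncWeight, h₁]
  exact h0 ▸ monotoneOn_truncWeight h₁ h self_mem_Ici hr hr

theorem hasDerivAt_truncWeightDeriv_of_mem_Ioo {r : ℝ} (hr : r ∈ Ioo r₁ r₂) :
    HasDerivAt (truncWeightDeriv r₁ r₂) (-2 * r₁ / (r₂ - r₁)) r := by
  have hlin : HasDerivAt (fun t => 2 * r₁ * (r₂ - t) / (r₂ - r₁)) (-2 * r₁ / (r₂ - r₁)) r :=
    ((((hasDerivAt_id r).const_sub r₂).const_mul (2 * r₁)).div_const (r₂ - r₁)).congr_deriv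
      (by ring)
  refine hlin.congr_of_eventuallyEq ?_
  filter_upwards [Ioo_mem_nhds hr.1 hr.2] with t ht
  simp [truncWeightDeriv, not_le.2 ht.1, ht.2.le]

theorem hasDerivAt_truncWeightDeriv_of_gt (h : r₁ ≤ r₂) {r : ℝ} (hr : r₂ < r) :
    HasDerivAt (truncWeightDeriv r₁ r₂) 0 r := by
  refine (hasDerivAt_const r 0).congr_of_eventuallyEq <| (eventually_gt_nhds hr).mono fun t ht => ?_
  simp [truncWeightDeriv, not_le.2 ht, not_le.2 (h.trans_lt ht)]

end TruncWeight

section Laplacian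

variable {ι E : Type*} [Fintype ι] [NormedAddCommGroup E] [InnerProductSpace ℝ E]

theorem hasFDerivAt_norm {x : E} (hx : x ≠ 0) :
    HasFDerivAt (‖·‖) (‖x‖⁻¹ • innerSL ℝ x) x := by
  have h := (hasStrictFDerivAt_norm_sq x).hasFDerivAt.sqrt (by positivity)
  simp only [Real.sqrt_sq (norm_nonneg _)] at h
  convert h using 1
  ext e
  simp
  field_simp

theorem fderiv_fderiv_comp_norm {g g' : ℝ → ℝ} {g'' : ℝ} {x : E} (hx : x ≠ 0)
    (hg : ∀ᶠ s in 𝓝 ‖x‖, HasDerivAt g (g' s) s) (hg' : HasDerivAt g' g'' ‖x‖) (e : E) :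
    fderiv ℝ (fun y => fderiv ℝ (fun z => g ‖z‖) y e) x e =
      g' ‖x‖ / ‖x‖ * (‖e‖ ^ 2 - (⟪x, e⟫ / ‖x‖) ^ 2) + g'' * (⟪x, e⟫ / ‖x‖) ^ 2 := by
  have hr : ‖x‖ ≠ 0 := norm_ne_zero_iff.2 hx
  have hfirst : (fun y => fderiv ℝ (fun z => g ‖z‖) y e) =ᶠ[𝓝 x]
      fun y => g' ‖y‖ / ‖y‖ * ⟪e, y⟫ := by
    filter_upwards [(continuous_norm.tendsto x).eventually hg, eventually_ne_nhds hx]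
      with y hgy hy
    have hd : HasFDerivAt (fun z => g ‖z‖) _ y := hgy.comp_hasFDerivAt y (hasFDerivAt_norm hy)
    rw [hd.fderiv]
    simp [real_inner_comm]
    ring
  have hquot : HasFDerivAt (fun y : E => g' ‖y‖ / ‖y‖)
      (((g'' * ‖x‖ - g' ‖x‖) / ‖x‖ ^ 2) • (‖x‖⁻¹ • innerSL ℝ x)) x :=
    ((hg'.div (hasDerivAt_id _) hr).comp_hasFDerivAt x (hasFDerivAt_norm hx)).congr_fderiv
      (by simp)
  have hsecond : HasFDerivAt (fun y => g' ‖y‖ / ‖y‖ * ⟪e, y⟫) _ x :=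
    hquot.mul (innerSL ℝ e).hasFDerivAt
  rw [hfirst.fderiv_eq, hsecond.fderiv]
  simp [real_inner_comm]
  field_simp
  ring

theorem OrthonormalBasis.nonempty_of_ne_zero (b : OrthonormalBasis ι ℝ E) {x : E} (hx : x ≠ 0) :
    Nonempty ι := by
  by_contra h
  rw [not_nonempty_iff] at h
  exact hx (by simpa using (b.sum_repr x).symm)

-- The trace of the Hessian in the basis `b`, written with nested `fderiv` as in the statement
-- rather than through Mathlib's `Δ`, which would need `C²` regularity to compare with it.
noncomputable def laplacianWrt (b : OrthonormalBasis ι ℝ E) (f : E → ℝ) (x : E) : ℝ :=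
  ∑ i, fderiv ℝ (fun y => fderiv ℝ f y (b i)) x (b i)

theorem laplacianWrt_basisFun [DecidableEq ι] (f : EuclideanSpace ℝ ι → ℝ)
    (x : EuclideanSpace ℝ ι) :
    laplacianWrt (EuclideanSpace.basisFun ι ℝ) f x =
      ∑ i, fderiv ℝ (fun y => fderiv ℝ f y (EuclideanSpace.single i 1)) x
        (EuclideanSpace.single i 1) := by
  simp [laplacianWrt]

variable (b : OrthonormalBasis ι ℝ E)

theorem laplacianWrt_congr_nhds {f g : E → ℝ} {x : E} (h : f =ᶠ[𝓝 x] g) :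
    laplacianWrt b f x = laplacianWrt b g x := by
  refine Finset.sum_congr rfl fun i _ => ?_
  rw [Filter.EventuallyEq.fderiv_eq (h.fderiv.mono fun y hy => DFunLike.congr_fun hy (b i))]

theorem laplacianWrt_norm_sq (x : E) :
    laplacianWrt b (‖·‖ ^ 2) x = 2 * Fintype.card ι := by
  have hfirst (e : E) :
      (fun y => fderiv ℝ (fun z : E => ‖z‖ ^ 2) y e) = ⇑((2 : ℝ) • innerSL ℝ e) := by
    ext y
    simp [fderiv_norm_sq_apply, real_inner_comm]
  simp only [laplacianWrt, hfirst, ContinuousLinearMap.fderiv]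
  simp [mul_comm]

theorem laplacianWrt_comp_norm {g g' : ℝ → ℝ} {g'' : ℝ} {x : E} (hx : x ≠ 0)
    (hg : ∀ᶠ s in 𝓝 ‖x‖, HasDerivAt g (g' s) s) (hg' : HasDerivAt g' g'' ‖x‖) :
    laplacianWrt b (fun z => g ‖z‖) x = g'' + (Fintype.card ι - 1) * g' ‖x‖ / ‖x‖ := by
  have hr : ‖x‖ ≠ 0 := norm_ne_zero_iff.2 hx
  have hsum : ∑ i, ⟪x, b i⟫ ^ 2 = ‖x‖ ^ 2 := b.sum_sq_inner_left x
  simp only [laplacianWrt, fderiv_fderiv_comp_norm hx hg hg', b.orthonormal.1, div_pow,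
    Finset.sum_add_distrib, ← Finset.mul_sum, Finset.sum_sub_distrib, ← Finset.sum_div, hsum]
  simp
  field_simp
  ring

variable {r₁ r₂ : ℝ} {x : E}

theorem laplacianWrt_truncWeight_of_norm_lt (hx : ‖x‖ < r₁) :
    laplacianWrt b (fun z => truncWeight r₁ r₂ ‖z‖) x = 2 * Fintype.card ι := by
  rw [← laplacianWrt_norm_sq b x]
  refine laplacianWrt_congr_nhds b ?_
  filter_upwards [(isOpen_lt continuous_norm continuous_const).mem_nhds hx] with z hz
  exact if_pos (le_of_lt hz)

theorem laplacianWrt_truncWeight_le (h₁ : 0 ≤ r₁) (h : r₁ < r₂) (hx : r₁ < ‖x‖)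
    (hx₂ : ‖x‖ ≠ r₂) :
    laplacianWrt b (fun z => truncWeight r₁ r₂ ‖z‖) x ≤ 2 * (Fintype.card ι - 1) := by
  have hr : 0 < ‖x‖ := h₁.trans_lt hx
  have hx0 : x ≠ 0 := norm_pos_iff.1 hr
  have hn : (1 : ℝ) ≤ Fintype.card ι := by
    have := b.nonempty_of_ne_zero hx0
    exact_mod_cast Fintype.card_pos
  have hg := Eventually.of_forall (f := 𝓝 ‖x‖) (hasDerivAt_truncWeight h)
  rcases hx₂.lt_or_gt with hx₂ | hx₂
  · rw [laplacianWrt_comp_norm b hx0 hg (hasDerivAt_truncWeightDeriv_of_mem_Ioo ⟨hx, hx₂⟩)]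
    simp only [truncWeightDeriv, if_neg (not_le.2 hx), if_pos hx₂.le]
    have hd : 0 < r₂ - r₁ := sub_pos.2 h
    have hform : -2 * r₁ / (r₂ - r₁) +
          (Fintype.card ι - 1) * (2 * r₁ * (r₂ - ‖x‖) / (r₂ - r₁)) / ‖x‖ =
        2 * r₁ * ((Fintype.card ι - 1) * (r₂ - ‖x‖) - ‖x‖) / ((r₂ - r₁) * ‖x‖) := by
      field_simp
      ring
    rw [hform, div_le_iff₀ (by positivity)]
    nlinarith [mul_nonneg (mul_nonneg (sub_nonneg.2 hn) (h₁.trans h.le)) (sub_pos.2 hx).le]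
  · rw [laplacianWrt_comp_norm b hx0 hg (hasDerivAt_truncWeightDeriv_of_gt h.le hx₂)]
    simp only [truncWeightDeriv, if_neg (not_le.2 hx), if_neg (not_le.2 hx₂), mul_zero, zero_div,
      add_zero]
    linarith

end Laplacian

/-- The truncated second-moment weight: `φ(r) = r²` on `[0,r₁]`,
`φ(r) = a₁r² + a₂r + a₃` on `[r₁,r₂]`, `φ(r) = r₁r₂` beyond. It is `C¹`,
nonnegative and nondecreasing, and the radial function `Φ(x) = φ(|x|)` on `ℝ²`
has Laplacian (sum of second partial derivatives) equal to `4` for `|x| < r₁`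
and `≤ 2` for `|x| > r₁` wherever it is defined (`|x| ≠ r₂`). -/
theorem stmt_13 (r₁ r₂ : ℝ) (h₁ : 0 < r₁) (h₁₂ : r₁ < r₂)
    (a₁ a₂ a₃ : ℝ)
    (ha₁ : a₁ = -r₁ / (r₂ - r₁)) (ha₂ : a₂ = 2 * r₁ * r₂ / (r₂ - r₁))
    (ha₃ : a₃ = -(r₁ ^ 2) * r₂ / (r₂ - r₁))
    (φ : ℝ → ℝ)
    (hφ : ∀ r : ℝ, φ r =
      if r ≤ r₁ then r ^ 2
      else if r ≤ r₂ then a₁ * r ^ 2 + a₂ * r + a₃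
      else r₁ * r₂) :
    ContDiffOn ℝ 1 φ (Ici 0) ∧
    (∀ r ∈ Ici (0:ℝ), 0 ≤ φ r) ∧
    MonotoneOn φ (Ici 0) ∧
    (∀ x : EuclideanSpace ℝ (Fin 2), ‖x‖ < r₁ →
      (∑ i : Fin 2,
        fderiv ℝ (fun y : EuclideanSpace ℝ (Fin 2) =>
          fderiv ℝ (fun z : EuclideanSpace ℝ (Fin 2) => φ ‖z‖) y
            (EuclideanSpace.single i 1)) x (EuclideanSpace.single i 1)) = 4) ∧
    (∀ x : EuclideanSpace ℝ (Fin 2), r₁ < ‖x‖ → ‖x‖ ≠ r₂ →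
      (∑ i : Fin 2,
        fderiv ℝ (fun y : EuclideanSpace ℝ (Fin 2) =>
          fderiv ℝ (fun z : EuclideanSpace ℝ (Fin 2) => φ ‖z‖) y
            (EuclideanSpace.single i 1)) x (EuclideanSpace.single i 1)) ≤ 2) := by
  obtain rfl : φ = truncWeight r₁ r₂ := by
    have hd : r₂ - r₁ ≠ 0 := sub_ne_zero.2 h₁₂.ne'
    funext r
    rw [hφ, truncWeight, ha₁, ha₂, ha₃]
    congr 2
    field_simp
    ring
  refine ⟨(contDiff_truncWeight h₁₂).contDiffOn, fun r hr => truncWeight_nonneg h₁.le h₁₂ hr,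
    monotoneOn_truncWeight h₁.le h₁₂, fun x hx => ?_, fun x hx hx₂ => ?_⟩
  · rw [← laplacianWrt_basisFun, laplacianWrt_truncWeight_of_norm_lt _ hx]
    norm_num
  · rw [← laplacianWrt_basisFun]
    exact (laplacianWrt_truncWeight_le _ h₁.le h₁₂ hx hx₂).trans_eq (by norm_num)
end
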